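/- Let X : [0,T] → ℝ^d be a C^1 path, let f : ℝ^e → L(ℝ^d, ℝ^e) be a smooth (C^∞) vector field, and let Y : [0,T] → ℝ^e solve Y'_t = f(Y_t)(X'_t) with Y_0 = y_0. Then for every m ≥ 0, every 0 ≤ s ≤ t ≤ T and every v ∈ (ℝ^d)^{⊗m}, ∫_s^t f^{∘(m+1)}(Y_u)(X'(u) ⊗ v) du = f^{∘m}(Y_t)(v) − f^{∘m}(Y_s)(v), where f^{∘0}(y)(v) := y·(scalar v) for m = 0 (i.e., for m = 0 the identity reads ∫_s^t f(Y_u)(X'(u)) du = Y_t − Y_s). -/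

import Mathlib

open MeasureTheory

noncomputable section

/-- The `k`-th tensor power of `ℝ^d`, identified with `ℝ^(d^k)` with the Euclidean norm. -/
abbrev Tpow (d k : ℕ) : Type := EuclideanSpace ℝ (Fin k → Fin d)

/-- Tensor product of tensor-power vectors. -/
def tmul {d k l : ℕ} (v : Tpow d k) (w : Tpow d l) : Tpow d (k + l) :=
  WithLp.toLp 2 (fun i => v (fun j => i (Fin.castAdd l j)) * w (fun j => i (Fin.natAdd k j)))

/-- Reindexing cast between tensor powers of equal order. -/
def tcast {d k l : ℕ} (h : k = l) (v : Tpow d k) : Tpow d l :=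
  WithLp.toLp 2 (fun i => v (fun j => i (Fin.cast h j)))

/-- Tensor product `a ⊗ w` of a vector of `ℝ^d` with a `k`-tensor. -/
def consT {d k : ℕ} (a : EuclideanSpace ℝ (Fin d)) (w : Tpow d k) : Tpow d (k + 1) :=
  WithLp.toLp 2 (fun i => a (i 0) * w (fun j => i j.succ))

/-- Iterated integrals `X^k_{s,t} = ∫_{s<s₁<⋯<s_k<t} X'(s₁) ⊗ ⋯ ⊗ X'(s_k) ds₁⋯ds_k`
of a C¹ path, defined recursively: `X^{k+1}_{s,t} = ∫_s^t X^k_{s,u} ⊗ X'(u) du`. -/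
def iterInt {d : ℕ} (X : ℝ → EuclideanSpace ℝ (Fin d)) : (k : ℕ) → ℝ → ℝ → Tpow d k
  | 0, _, _ => WithLp.toLp 2 (fun _ => 1)
  | (k+1), s, t => WithLp.toLp 2 (fun i =>
      ∫ u in s..t, iterInt X k s u (fun j => i j.castSucc) * deriv X u (i (Fin.last k)))

/-- Slicing a `(k+1)`-tensor along first coordinate `j`. -/
def sliceT {d : ℕ} (k : ℕ) (j : Fin d) : Tpow d (k + 1) →L[ℝ] Tpow d k :=
  LinearMap.toContinuousLinearMap
    { toFun := fun w => (WithLp.toLp 2 (fun v => w (Fin.cons j v)) : Tpow d k)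
      map_add' := fun _ _ => rfl
      map_smul' := fun _ _ => rfl }

/-- `f^{∘k}` defined inductively: `f^{∘0}(y)(v) = v·y` (so that `f^{∘1} = f` under
`(ℝ^d)^{⊗1} ≅ ℝ^d`), and `f^{∘(k+1)}(y)(a ⊗ v) = (D(f^{∘k})(y)(f(y)(a)))(v)`, encoded by
decomposing a `(k+1)`-tensor along its first coordinate. -/
def fcirc {d e : ℕ}
    (f : EuclideanSpace ℝ (Fin e) → (EuclideanSpace ℝ (Fin d) →L[ℝ] EuclideanSpace ℝ (Fin e))) :
    (k : ℕ) → EuclideanSpace ℝ (Fin e) → (Tpow d k →L[ℝ] EuclideanSpace ℝ (Fin e))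
  | 0 => fun y => LinearMap.toContinuousLinearMap
      { toFun := fun v => v (fun i => i.elim0) • y
        map_add' := fun v v' => by simp [PiLp.add_apply, add_smul]
        map_smul' := fun c v => by simp [PiLp.smul_apply, smul_smul] }
  | (k+1) => fun y =>
      ∑ j : Fin d, ((fderiv ℝ (fcirc f k) y) (f y (EuclideanSpace.single j 1))).comp (sliceT k j)

lemma sliceT_consT {d k : ℕ} (j : Fin d) (a : EuclideanSpace ℝ (Fin d)) (v : Tpow d k) :
    sliceT k j (consT a v) = a j • v := by
  ext i
  show consT a v (Fin.cons j i) = a j * v i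
  unfold consT
  simp only [PiLp.toLp_apply]
  rw [Fin.cons_zero]
  have h : (fun j_1 : Fin k => Fin.cons (α := fun _ => Fin d) j i j_1.succ) = i :=
    funext fun l => @Fin.cons_succ k (fun _ => Fin d) j i l
  rw [h]

lemma sum_single_smul {d : ℕ} (a : EuclideanSpace ℝ (Fin d)) :
    ∑ j : Fin d, a j • EuclideanSpace.single j (1 : ℝ) = a := by
  ext i
  show (∑ j : Fin d, a j • EuclideanSpace.single j (1 : ℝ)) i = a i
  rw [WithLp.ofLp_sum, Finset.sum_apply]
  simp [EuclideanSpace.single_apply]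

lemma fcirc_succ_apply {d e : ℕ}
    (f : EuclideanSpace ℝ (Fin e) → (EuclideanSpace ℝ (Fin d) →L[ℝ] EuclideanSpace ℝ (Fin e)))
    (k : ℕ) (y : EuclideanSpace ℝ (Fin e)) (a : EuclideanSpace ℝ (Fin d)) (v : Tpow d k) :
    fcirc f (k + 1) y (consT a v) = (fderiv ℝ (fcirc f k) y) (f y a) v := by
  have ha : f y a = ∑ j : Fin d, a j • f y (EuclideanSpace.single j 1) := by
    conv_lhs => rw [← sum_single_smul a]
    rw [map_sum]
    simp only [_root_.map_smul]
  rw [ha]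
  simp only [fcirc, ContinuousLinearMap.sum_apply, ContinuousLinearMap.comp_apply,
    sliceT_consT, _root_.map_smul, map_sum, ContinuousLinearMap.smul_apply]

lemma fcirc_contDiff {d e : ℕ}
    {f : EuclideanSpace ℝ (Fin e) → (EuclideanSpace ℝ (Fin d) →L[ℝ] EuclideanSpace ℝ (Fin e))}
    (hf : ContDiff ℝ (⊤ : ℕ∞) f) : ∀ k, ContDiff ℝ (⊤ : ℕ∞) (fcirc f k)
  | 0 => by
    have : fcirc f 0 = fun y =>
        (ContinuousLinearMap.smulRightL ℝ (Tpow d 0) (EuclideanSpace ℝ (Fin e))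
          (EuclideanSpace.proj (fun i : Fin 0 => i.elim0))) y := by
      funext y
      ext v
      rfl
    rw [this]
    exact (ContinuousLinearMap.smulRightL ℝ (Tpow d 0) (EuclideanSpace ℝ (Fin e))
      (EuclideanSpace.proj (fun i : Fin 0 => i.elim0))).contDiff
  | (k + 1) => by
    have ih := fcirc_contDiff hf k
    have h1 : ContDiff ℝ (⊤ : ℕ∞) (fderiv ℝ (fcirc f k)) := ih.fderiv_right (by simp)
    show ContDiff ℝ (⊤ : ℕ∞) (fun y => ∑ j : Fin d,
      ((fderiv ℝ (fcirc f k) y) (f y (EuclideanSpace.single j 1))).comp (sliceT k j))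
    exact ContDiff.sum fun j _ =>
      (h1.clm_apply (hf.clm_apply contDiff_const)).clm_comp contDiff_const

/-- For a C¹ path `X`, a smooth vector field `f`, and a solution `Y` of
`dY = f(Y) dX`, `Y₀ = y₀`: for every `m ≥ 0`, `0 ≤ s ≤ t ≤ T`, and `v ∈ (ℝ^d)^{⊗m}`,
`∫_s^t f^{∘(m+1)}(Y_u)(X'(u) ⊗ v) du = f^{∘m}(Y_t)(v) − f^{∘m}(Y_s)(v)`
(where `f^{∘0}(y)(v) = (scalar v)·y`, so for `m = 0` this is `∫_s^t f(Y_u)(X'(u)) du = Y_t − Y_s`). -/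
theorem fcirc_fundamental_theorem {d e : ℕ} (T : ℝ)
    (X : ℝ → EuclideanSpace ℝ (Fin d)) (hX : ContDiff ℝ 1 X)
    (f : EuclideanSpace ℝ (Fin e) → (EuclideanSpace ℝ (Fin d) →L[ℝ] EuclideanSpace ℝ (Fin e)))
    (hf : ContDiff ℝ (⊤ : ℕ∞) f)
    (Y : ℝ → EuclideanSpace ℝ (Fin e)) (y₀ : EuclideanSpace ℝ (Fin e))
    (hY0 : Y 0 = y₀)
    (hY : ∀ u ∈ Set.Icc (0 : ℝ) T, HasDerivAt Y (f (Y u) (deriv X u)) u)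
    (m : ℕ) (s t : ℝ) (hs : 0 ≤ s) (hst : s ≤ t) (htT : t ≤ T) (v : Tpow d m) :
    ∫ u in s..t, fcirc f (m + 1) (Y u) (consT (deriv X u) v)
      = fcirc f m (Y t) v - fcirc f m (Y s) v := by
  have hsub : Set.uIcc s t ⊆ Set.Icc 0 T := by
    rw [Set.uIcc_of_le hst]
    exact fun u hu => ⟨hs.trans hu.1, hu.2.trans htT⟩
  have hYc : ContinuousOn Y (Set.uIcc s t) := fun u hu =>
    ((hY u (hsub hu)).continuousAt).continuousWithinAt
  have key : ∀ u ∈ Set.uIcc s t,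
      HasDerivAt (fun x => fcirc f m (Y x) v)
        (fcirc f (m + 1) (Y u) (consT (deriv X u) v)) u := by
    intro u hu
    have hY' := hY u (hsub hu)
    have hd : HasFDerivAt (fcirc f m) (fderiv ℝ (fcirc f m) (Y u)) (Y u) :=
      (((fcirc_contDiff hf m).differentiable (by simp)) (Y u)).hasFDerivAt
    have h2 : HasDerivAt (fun x => fcirc f m (Y x))
        (fderiv ℝ (fcirc f m) (Y u) (f (Y u) (deriv X u))) u :=
      hd.comp_hasDerivAt u hY'
    have h3 := (ContinuousLinearMap.apply ℝ (EuclideanSpace ℝ (Fin e))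
      v).hasFDerivAt.comp_hasDerivAt u h2
    rw [fcirc_succ_apply]
    exact h3
  have heq : (fun u => fcirc f (m + 1) (Y u) (consT (deriv X u) v))
      = fun u => (fderiv ℝ (fcirc f m) (Y u)) (f (Y u) (deriv X u)) v :=
    funext fun u => fcirc_succ_apply f m (Y u) (deriv X u) v
  have hint : IntervalIntegrable
      (fun u => fcirc f (m + 1) (Y u) (consT (deriv X u) v)) volume s t := by
    apply ContinuousOn.intervalIntegrable
    rw [heq]
    have c1 : ContinuousOn (fun u => fderiv ℝ (fcirc f m) (Y u)) (Set.uIcc s t) :=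
      (((fcirc_contDiff hf m).fderiv_right (m := (⊤ : ℕ∞)) (by simp)).continuous).comp_continuousOn hYc
    have c2 : ContinuousOn (fun u => f (Y u) (deriv X u)) (Set.uIcc s t) :=
      (hf.continuous.comp_continuousOn hYc).clm_apply
        (hX.continuous_deriv le_rfl).continuousOn
    exact (c1.clm_apply c2).clm_apply continuousOn_const
  exact intervalIntegral.integral_eq_sub_of_hasDerivAt key hint

end
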